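/- For 0 < r < 1, the matrices T(r) and T(-r/(1-r)) are mutually inverse: for all m, n, ∑_k t^{r}_{mk} · t^{-r/(1-r)}_{kn} = δ_{mn}, where t^{s}_{nk} = C(k,n)(1-s)^{n+1} s^{k-n} for k ≥ n and 0 otherwise. -/

import Mathlib

/-!
If `(1 - s) * (1 - t) = 1`, then for `m ≤ k ≤ n` the identity
`C(k, m) C(n, k) = C(n, m) C(n - m, k - m)` turns the product `t^s_{mk} t^t_{kn}` into
`C(n, m)` times the `k`-th term of the binomial expansion of `(s (1 - t) + t) ^ (n - m)`.
Only finitely many `k` contribute, and `s (1 - t) + t = 1 - (1 - s)(1 - t) = 0`, so the sum is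
`C(n, m) 0 ^ (n - m) = δ_{mn}`. The parameters `r` and `-r / (1 - r)` satisfy this relation.
-/

/-- The Taylor matrix of order `s`. -/
noncomputable def taylorEntry (s : ℝ) (n k : ℕ) : ℝ :=
  if n ≤ k then (k.choose n : ℝ) * (1 - s) ^ (n + 1) * s ^ (k - n) else 0

open Finset

theorem taylorEntry_eq_zero_of_lt {s : ℝ} {n k : ℕ} (h : k < n) : taylorEntry s n k = 0 :=
  if_neg h.not_ge

theorem taylorEntry_mul_taylorEntry {s t : ℝ} (hst : (1 - s) * (1 - t) = 1) {m k n : ℕ}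
    (hmk : m ≤ k) (hkn : k ≤ n) :
    taylorEntry s m k * taylorEntry t k n =
      n.choose m * ((s * (1 - t)) ^ (k - m) * t ^ (n - k) * (n - m).choose (k - m)) := by
  obtain ⟨j, rfl⟩ := Nat.exists_eq_add_of_le hmk
  have hchoose : (n.choose (m + j) : ℝ) * ((m + j).choose m : ℝ) =
      n.choose m * (n - m).choose j := by
    exact_mod_cast Nat.add_sub_cancel_left (n := m) (m := j) ▸ Nat.choose_mul (n := n) hmk
  rw [taylorEntry, taylorEntry, if_pos hmk, if_pos hkn, Nat.add_sub_cancel_left]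
  calc ((m + j).choose m : ℝ) * (1 - s) ^ (m + 1) * s ^ j *
        ((n.choose (m + j)) * (1 - t) ^ (m + j + 1) * t ^ (n - (m + j)))
      = (n.choose (m + j) * (m + j).choose m : ℝ) * ((1 - s) ^ (m + 1) * (1 - t) ^ (m + 1)) *
          ((s * (1 - t)) ^ j * t ^ (n - (m + j))) := by rw [mul_pow s]; ring
    _ = _ := by rw [hchoose, ← mul_pow, hst]; ring

theorem sum_Icc_taylorEntry_mul_taylorEntry {s t : ℝ} (hst : (1 - s) * (1 - t) = 1)
    (m n : ℕ) :
    ∑ k ∈ Icc m n, taylorEntry s m k * taylorEntry t k n = if m = n then 1 else 0 := by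
  rcases lt_or_ge n m with hnm | hmn
  · simp [Icc_eq_empty_of_lt hnm, hnm.ne']
  have hbase : s * (1 - t) + t = 0 := by linear_combination -hst
  calc ∑ k ∈ Icc m n, taylorEntry s m k * taylorEntry t k n
      = ∑ k ∈ Icc m n, n.choose m *
          ((s * (1 - t)) ^ (k - m) * t ^ (n - k) * (n - m).choose (k - m)) :=
        sum_congr rfl fun k hk ↦
          taylorEntry_mul_taylorEntry hst (mem_Icc.1 hk).1 (mem_Icc.1 hk).2
    _ = n.choose m * (s * (1 - t) + t) ^ (n - m) := by
        rw [← mul_sum, add_pow, ← Ico_add_one_right_eq_Icc, sum_Ico_eq_sum_range,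
          Nat.sub_add_comm hmn]
        congr 1
        refine sum_congr rfl fun j _ ↦ ?_
        rw [Nat.add_sub_cancel_left, Nat.sub_sub]
    _ = if m = n then 1 else 0 := by
        rcases hmn.eq_or_lt with rfl | hlt
        · simp
        · simp [hbase, hlt.ne, Nat.sub_ne_zero_of_lt hlt]

theorem hasSum_taylorEntry_mul_taylorEntry {s t : ℝ} (hst : (1 - s) * (1 - t) = 1)
    (m n : ℕ) :
    HasSum (fun k ↦ taylorEntry s m k * taylorEntry t k n) (if m = n then 1 else 0) := by
  rw [← sum_Icc_taylorEntry_mul_taylorEntry hst m n]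
  refine hasSum_sum_of_ne_finset_zero fun k hk ↦ ?_
  rcases not_and_or.1 (mem_Icc.not.1 hk) with hmk | hkn
  · rw [taylorEntry_eq_zero_of_lt (not_le.1 hmk), zero_mul]
  · rw [taylorEntry_eq_zero_of_lt (not_le.1 hkn), mul_zero]

theorem taylor_inverse_general (r : ℝ) (hr1 : r < 1) (m n : ℕ) :
    HasSum (fun k => taylorEntry r m k * taylorEntry (-r / (1 - r)) k n)
      (if m = n then 1 else 0) := by
  have hr : 1 - r ≠ 0 := sub_ne_zero.2 hr1.ne'
  refine hasSum_taylorEntry_mul_taylorEntry ?_ m n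
  field_simp
  ring

/-- For `0 < r < 1`, the Taylor matrices `T(r)` and `T(-r/(1-r))` are mutually inverse :
for all `m, n`, `∑_k t^r_{m k} · t^{-r/(1-r)}_{k n} = δ_{m n}`. -/
theorem taylor_inverse (r : ℝ) (hr0 : 0 < r) (hr1 : r < 1) (m n : ℕ) :
    HasSum (fun k => taylorEntry r m k * taylorEntry (-r / (1 - r)) k n)
      (if m = n then 1 else 0) :=
  taylor_inverse_general r hr1 m n
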